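/- Let N ∈ ℕ, N ≥ 2, and let g₁, …, g_N denote the gaps of the first N terms of the sequence x_n := {log(2n−1)/log 2} on the torus. Then the multiset of gap lengths, arranged in ascending order h₁ ≤ h₂ ≤ … ≤ h_N, satisfies h_i = (log(2N + 1 − i) − log(2N − i))/log(2) for i = 1, …, N; equivalently, the multiset of gaps equals { (log(m+1) − log(m))/log(2) : N ≤ m ≤ 2N−1 }. -/

import Mathlib

/-!
Each odd number `2n - 1 ≤ 2N - 1` has a multiple `2^k (2n - 1)` in `[N, 2N)`, and every integer
of `[N, 2N)` is of this form, so the points are the fractional parts of `log₂ m`, `N ≤ m < 2N`.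
Since `log₂ (2N) = log₂ N + 1`, the increasing reals `log₂ N < ⋯ < log₂ (2N)` wind exactly once
around the circle. Read from the point where it crosses an integer, this cyclic sequence has
sorted fractional parts, so the cyclic gaps are the increments `log₂ (m + 1) - log₂ m`, rotated.
-/

open Finset Real

/-- The sequence `x_n = {log(2n-1)/log 2}`. -/
noncomputable def xseq (n : ℕ) : ℝ := Int.fract (Real.log (2 * (n : ℝ) - 1) / Real.log 2)

theorem Function.Periodic.map_Ico_nat {α : Type*} {f : ℕ → α} {N : ℕ}
    (hf : Function.Periodic f N) (n : ℕ) :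
    (Ico n (n + N)).val.map f = (range N).val.map f := by
  rw [range_val, ← Nat.multiset_Ico_map_mod n N, Multiset.map_map]
  exact Multiset.map_congr rfl fun j _ => (hf.map_mod_nat j).symm

theorem Finset.map_Icc_add_left {α : Type*} (f : ℕ → α) (p a b : ℕ) :
    (Icc a b).val.map (fun i => f (p + i)) = (Icc (p + a) (p + b)).val.map f := by
  rw [← map_add_left_Icc, map_val, Multiset.map_map]
  rfl

theorem Finset.eqOn_of_monotoneOn_of_strictMonoOn {α β : Type*} [LinearOrder α]
    [LinearOrder β] {s : Finset α} {f g : α → β} (hf : MonotoneOn f s) (hg : StrictMonoOn g s)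
    (h : s.image f = s.image g) : Set.EqOn f g s := by
  classical
  have hf' : StrictMonoOn f s := hf.strictMonoOn_of_injOn <| injOn_of_card_image_eq <| by
    rw [h, card_image_of_injOn hg.injOn]
  set e := s.orderEmbOfFin rfl
  have he : ∀ i, e i ∈ s := fun i => orderEmbOfFin_mem s rfl i
  have hcomp : f ∘ e = g ∘ e := by
    refine (StrictMono.range_inj (fun a b hab => hf' (he a) (he b) (e.strictMono hab))
      (fun a b hab => hg (he a) (he b) (e.strictMono hab))).mp ?_
    change Set.range (f ∘ e) = Set.range (g ∘ e)
    rw [Set.range_comp, Set.range_comp, range_orderEmbOfFin, ← coe_image, ← coe_image, h]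
  intro x hx
  rw [← range_orderEmbOfFin s rfl] at hx
  obtain ⟨i, rfl⟩ := hx
  exact congrFun hcomp i

theorem Nat.exists_lt_and_le_succ_of_lt_of_le {α : Type*} [LinearOrder α] {Z : ℕ → α} {c : α}
    {N : ℕ} (h0 : Z 0 < c) (hN : c ≤ Z N) : ∃ p, Z p < c ∧ c ≤ Z (p + 1) := by
  by_contra! h
  have hlt : ∀ j, Z j < c := fun j => by
    induction j with
    | zero => exact h0
    | succ j ih => exact h j ih
  exact (hN.trans_lt (hlt N)).false

noncomputable def circleLift (N : ℕ) (z : ℕ → ℝ) (j : ℕ) : ℝ := z (j % N) + (j / N : ℕ)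

section circleLift

variable {N : ℕ} {z : ℕ → ℝ}

theorem pos_of_apply_eq_apply_zero_add_one (hzN : z N = z 0 + 1) : 0 < N :=
  Nat.pos_of_ne_zero fun h => by subst h; linarith

theorem circleLift_mul_add (hzN : z N = z 0 + 1) (q : ℕ) {r : ℕ} (hr : r ≤ N) :
    circleLift N z (N * q + r) = z r + q := by
  have hN := pos_of_apply_eq_apply_zero_add_one hzN
  rcases hr.lt_or_eq with hr | rfl
  · simp [circleLift, Nat.mod_eq_of_lt hr, Nat.mul_add_div hN, Nat.div_eq_of_lt hr]
  · rw [← Nat.mul_succ, circleLift, Nat.mul_mod_right, Nat.mul_div_cancel_left _ hN, hzN]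
    push_cast
    ring

theorem circleLift_of_le (hzN : z N = z 0 + 1) {r : ℕ} (hr : r ≤ N) :
    circleLift N z r = z r := by
  simpa using circleLift_mul_add hzN 0 hr

theorem circleLift_add_self (hzN : z N = z 0 + 1) (j : ℕ) :
    circleLift N z (j + N) = circleLift N z j + 1 := by
  have hN := pos_of_apply_eq_apply_zero_add_one hzN
  have hr := (Nat.mod_lt j hN).le
  rw [← Nat.div_add_mod j N, show N * (j / N) + j % N + N = N * (j / N + 1) + j % N by ring,
    circleLift_mul_add hzN _ hr, circleLift_mul_add hzN _ hr]
  push_cast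
  ring

theorem strictMono_circleLift (hz : StrictMono z) (hzN : z N = z 0 + 1) :
    StrictMono (circleLift N z) := by
  have hN := pos_of_apply_eq_apply_zero_add_one hzN
  refine strictMono_nat_of_lt_succ fun j => ?_
  have hr := Nat.mod_lt j hN
  rw [← Nat.div_add_mod j N, add_assoc, circleLift_mul_add hzN _ hr.le,
    circleLift_mul_add hzN _ hr]
  gcongr
  exact hz (Nat.lt_succ_self _)

end circleLift

def cyclicGap (N : ℕ) (y : ℕ → ℝ) (i : ℕ) : ℝ :=
  if i < N then y (i + 1) - y i else y 1 + 1 - y N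

theorem exists_fract_eq_sub_intCast {N : ℕ} {Z : ℕ → ℝ} (hZ : Monotone Z)
    (hper : ∀ j, Z (j + N) = Z j + 1) :
    ∃ (p : ℕ) (c : ℤ), ∀ i ∈ Icc 1 N, Int.fract (Z (p + i)) = Z (p + i) - c := by
  set c : ℤ := ⌊Z 0⌋ + 1
  obtain ⟨p, hp, hp1⟩ := Nat.exists_lt_and_le_succ_of_lt_of_le (Z := Z) (c := (c : ℝ)) (N := N)
    (by push_cast [c]; exact Int.lt_floor_add_one _)
    (by rw [← zero_add N, hper]; push_cast [c]; linarith [Int.floor_le (Z 0)])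
  refine ⟨p, c, fun i hi => Int.fract_eq_iff.mpr ⟨?_, ?_, c, by ring⟩⟩ <;> rw [mem_Icc] at hi
  · linarith [hZ (show p + 1 ≤ p + i by omega)]
  · linarith [hZ (show p + i ≤ p + N by omega), hper p]

theorem map_cyclicGap_of_lift {N : ℕ} {Z : ℕ → ℝ} (hZ : StrictMono Z)
    (hper : ∀ j, Z (j + N) = Z j + 1) {y : ℕ → ℝ} (hy : MonotoneOn y (Icc 1 N))
    (himg : (Icc 1 N).image y = (range N).image (fun j => Int.fract (Z j))) :
    (Icc 1 N).val.map (cyclicGap N y) = (range N).val.map (fun j => Z (j + 1) - Z j) := by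
  obtain ⟨p, c, hfract⟩ := exists_fract_eq_sub_intCast hZ.monotone hper
  have hIcc : Icc (p + 1) (p + N) = Ico (p + 1) (p + 1 + N) := by ext; simp; omega
  -- `Z (p + 1) < ⋯ < Z (p + N)` lie in one unit interval, so they list the points in sorted order
  have hyZ : Set.EqOn y (fun i => Z (p + i) - c) (Icc 1 N) := by
    refine eqOn_of_monotoneOn_of_strictMonoOn hy (fun a _ b _ hab => ?_) ?_
    · linarith [hZ (show p + a < p + b by omega)]
    rw [himg, ← image_congr hfract, image, image, map_Icc_add_left (fun j => Int.fract (Z j)),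
      hIcc, Function.Periodic.map_Ico_nat fun j => by simp only [hper, Int.fract_add_one]]
  have hgap : ∀ i ∈ Icc 1 N, cyclicGap N y i = Z (p + i + 1) - Z (p + i) := by
    intro i hi
    have hi' := mem_Icc.mp hi
    unfold cyclicGap
    split_ifs with h
    · rw [hyZ hi, hyZ (mem_Icc.mpr ⟨by omega, h⟩)]
      simp only [Nat.succ_eq_add_one, ← add_assoc]
      ring
    · obtain rfl : i = N := by omega
      rw [hyZ (mem_Icc.mpr ⟨le_rfl, hi'.1⟩), hyZ hi, add_right_comm, hper]
      ring
  calc _ = (Icc 1 N).val.map (fun i => Z (p + i + 1) - Z (p + i)) :=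
        Multiset.map_congr rfl hgap
    _ = (range N).val.map (fun j => Z (j + 1) - Z j) := by
      rw [map_Icc_add_left (fun j => Z (j + 1) - Z j), hIcc]
      exact Function.Periodic.map_Ico_nat (fun j => by
        simp only [add_right_comm j N 1, hper]; ring) _

theorem map_cyclicGap_eq {N : ℕ} {z : ℕ → ℝ} (hz : StrictMono z) (hzN : z N = z 0 + 1)
    {y : ℕ → ℝ} (hy : MonotoneOn y (Icc 1 N))
    (himg : (Icc 1 N).image y = (range N).image (fun j => Int.fract (z j))) :
    (Icc 1 N).val.map (cyclicGap N y) = (range N).val.map (fun j => z (j + 1) - z j) := by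
  have hlift : ∀ j ∈ range N, circleLift N z j = z j := fun j hj =>
    circleLift_of_le hzN (mem_range.mp hj).le
  rw [map_cyclicGap_of_lift (strictMono_circleLift hz hzN) (circleLift_add_self hzN) hy
    (himg.trans (image_congr fun j hj => by rw [hlift j hj]))]
  refine Multiset.map_congr rfl fun j hj => ?_
  rw [circleLift_of_le hzN (mem_range.mp hj), hlift j hj]

theorem Int.fract_logb_pow_mul {b x : ℝ} (hb : 1 < b) (k : ℕ) (hx : x ≠ 0) :
    Int.fract (logb b (b ^ k * x)) = Int.fract (logb b x) := by
  rw [logb_mul (by positivity) hx, logb_pow, logb_self_eq_one hb, mul_one, Int.fract_natCast_add]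

theorem Nat.exists_two_pow_mul_mem_Ico {N q : ℕ} (hq : 0 < q) (hqN : q < 2 * N) :
    ∃ k, N ≤ 2 ^ k * q ∧ 2 ^ k * q < 2 * N := by
  by_cases h : N ≤ q
  · exact ⟨0, by simpa using h, by simpa using hqN⟩
  · obtain ⟨k, hk⟩ := exists_two_pow_mul_mem_Ico (N := N) (q := 2 * q) (by omega) (by omega)
    exact ⟨k + 1, by rwa [pow_succ, mul_assoc]⟩
termination_by N - q

theorem image_xseq_Icc (N : ℕ) :
    (Icc 1 N).image xseq = (range N).image (fun j : ℕ => Int.fract (logb 2 ((N : ℝ) + j))) := by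
  have hx : ∀ q n : ℕ, q = 2 * n - 1 → 1 ≤ n → xseq n = Int.fract (logb 2 q) := by
    rintro q n rfl hn
    rw [xseq, log_div_log]
    push_cast [show 1 ≤ 2 * n by omega]
    rfl
  ext x
  simp only [mem_image, mem_Icc, mem_range]
  constructor
  · rintro ⟨n, hn, rfl⟩
    obtain ⟨k, hk⟩ := Nat.exists_two_pow_mul_mem_Ico (q := 2 * n - 1) (N := N) (by omega)
      (by omega)
    refine ⟨2 ^ k * (2 * n - 1) - N, by omega, ?_⟩
    rw [hx _ n rfl hn.1, ← Int.fract_logb_pow_mul one_lt_two k (x := ((2 * n - 1 : ℕ) : ℝ))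
      (by norm_cast; omega)]
    congr 2
    exact_mod_cast (show N + (2 ^ k * (2 * n - 1) - N) = 2 ^ k * (2 * n - 1) by omega)
  · rintro ⟨j, hj, rfl⟩
    obtain ⟨k, q, ⟨n, rfl⟩, hq⟩ := Nat.exists_eq_two_pow_mul_odd (n := N + j) (by omega)
    have hq' : 2 * n + 1 ≤ N + j := by
      rw [hq]; exact Nat.le_mul_of_pos_left _ (by positivity)
    refine ⟨n + 1, by omega, ?_⟩
    rw [hx (2 * n + 1) (n + 1) (by omega) (by omega),
      ← Int.fract_logb_pow_mul one_lt_two k (x := ((2 * n + 1 : ℕ) : ℝ)) (by positivity)]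
    congr 2
    exact_mod_cast hq.symm

theorem gap_multiset (N : ℕ) (hN : 2 ≤ N) (y : ℕ → ℝ)
    (hmono : ∀ i j, 1 ≤ i → i ≤ j → j ≤ N → y i ≤ y j)
    (himg : Finset.image y (Finset.Icc 1 N) = Finset.image xseq (Finset.Icc 1 N)) :
    Multiset.map (fun i => if i < N then y (i + 1) - y i else y 1 + 1 - y N)
        (Finset.Icc 1 N).val =
      Multiset.map (fun m => (Real.log ((m : ℝ) + 1) - Real.log (m : ℝ)) / Real.log 2)
        (Finset.Icc N (2 * N - 1)).val := by
  have hN0 : (0 : ℝ) < N := by exact_mod_cast (by omega : 0 < N)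
  set z : ℕ → ℝ := fun j => logb 2 ((N : ℝ) + j)
  have hz : StrictMono z := fun a b hab =>
    logb_lt_logb one_lt_two (by positivity) (by simpa using hab)
  have hzN : z N = z 0 + 1 := by
    simp only [z, CharP.cast_eq_zero, add_zero, ← two_mul]
    rw [logb_mul two_ne_zero hN0.ne', logb_self_eq_one one_lt_two, add_comm]
  calc _ = (range N).val.map (fun j => z (j + 1) - z j) :=
        map_cyclicGap_eq hz hzN (fun a ha b hb hab => hmono a b (mem_Icc.mp ha).1 hab
          (mem_Icc.mp hb).2) (himg.trans (image_xseq_Icc N))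
    _ = _ := by
      -- the cast `(m : ℝ)` in the statement coerces the multiset `Icc N (2 * N - 1)` monadically
      simp only [Multiset.pure_def, Multiset.bind_def, Multiset.bind_singleton, Multiset.map_map]
      rw [show Icc N (2 * N - 1) = Icc (N + 0) (N + (N - 1)) by congr 1; omega,
        ← map_Icc_add_left, ← Nat.range_eq_Icc_zero_sub_one _ (by omega)]
      refine Multiset.map_congr rfl fun j _ => ?_
      simp only [z, logb, Function.comp_apply]
      push_cast
      rw [add_assoc, sub_div]
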